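/- arXiv:2001.03817 — 3 statements merged into one kernel-verified Lean document; each statement's English description precedes it below -/
import Mathlib

section
/- Let (M, 𝓔, g) be a sub-Riemannian manifold and let ∇ be a connection on TM compatible with the sub-Riemannian structure, with adjoint connection ∇̂ and associated covariant derivative D̂_t along curves. A curve γ : [0, t₁] → M is a normal geodesic if and only if there exists a one-form λ(t) along γ satisfying D̂_t λ = 0 and ♯λ(t) = γ̇(t) for all t. Furthermore, in that case λ(t) is an extremal of γ, i.e. λ(t) = e^{tH⃗}(λ(0)). -/
noncomputable section
open scoped RealInnerProductSpace
open Classical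

namespace SR

/-!
We work in a global trivialisation: the manifold is `ℝⁿ = EuclideanSpace ℝ (Fin n)`, all
tangent spaces are identified with `ℝⁿ`, and covectors are identified with vectors through
the Euclidean inner product (so that `p(v) = ⟪p, v⟫`).  The cotangent bundle `T*M` is
`ℝⁿ × ℝⁿ` with canonical symplectic coordinates.
-/

/-- The model space `ℝⁿ`. -/
abbrev V (n : ℕ) := EuclideanSpace ℝ (Fin n)

variable {n : ℕ}

/-- Lie bracket of vector fields (in the global chart). -/
def lieB {E : Type*} [NormedAddCommGroup E] [NormedSpace ℝ E] (X Y : E → E) : E → E :=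
  fun x => fderiv ℝ Y x (X x) - fderiv ℝ X x (Y x)

/-- A sub-Riemannian structure on `ℝⁿ`, recorded through its cometric
`♯ : T*M → TM` (a smooth family of symmetric positive semidefinite operators).
The horizontal bundle is `𝓔 = range ♯` and the metric `g` on `𝓔` is determined by
`⟨♯p, ♯q⟩_g = ⟪♯p, q⟫`. -/
structure SubRiemannian (n : ℕ) where
  sharp : V n → V n →L[ℝ] V n
  smooth : ContDiff ℝ (⊤ : ℕ∞) (fun x => sharp x)
  symm : ∀ x p q, ⟪sharp x p, q⟫ = ⟪p, sharp x q⟫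
  nonneg : ∀ x p, 0 ≤ ⟪sharp x p, p⟫

namespace SubRiemannian

variable (S : SubRiemannian n)

/-- The horizontal space `𝓔ₓ`. -/
def horiz (x : V n) : Submodule ℝ (V n) := LinearMap.range (S.sharp x : V n →ₗ[ℝ] V n)

/-- A smooth horizontal vector field. -/
def IsHorizField (X : V n → V n) : Prop :=
  ContDiff ℝ (⊤ : ℕ∞) X ∧ ∀ x, X x ∈ S.horiz x

/-- The flag of families of vector fields `𝓔¹ ⊆ 𝓔² ⊆ ⋯` generated by iterated brackets of
horizontal fields: `flagFields k` corresponds to `𝓔^{k+1}` of the paper. -/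
def flagFields : ℕ → Set (V n → V n)
  | 0 => {X | S.IsHorizField X}
  | (k+1) => flagFields k ∪ {Z | ∃ X Y, S.IsHorizField X ∧ Y ∈ flagFields k ∧ Z = lieB X Y}

/-- `𝓔^k_x` (for `k ≥ 1`). -/
def growth (k : ℕ) (x : V n) : Submodule ℝ (V n) :=
  Submodule.span ℝ {v | ∃ X ∈ S.flagFields (k - 1), X x = v}

/-- The distribution is bracket-generating. -/
def BracketGenerating : Prop := ∀ x, ∃ k, S.growth k x = ⊤

/-- The annihilator `Ann(𝓔)ₓ` of the horizontal space (as a set of covectors). -/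
def ann (x : V n) : Set (V n) := {p | S.sharp x p = 0}

/-- The sub-Riemannian inner product on the horizontal space: for `v = ♯p ∈ 𝓔ₓ` and
`w ∈ 𝓔ₓ`, `⟨v, w⟩_g = ⟪p, w⟫` (independent of the choice of `p`). -/
def gInner (x v w : V n) : ℝ :=
  if h : ∃ p, S.sharp x p = v then ⟪Classical.choose h, w⟫ else 0

/-- The sub-Riemannian norm of a horizontal vector. -/
def gNorm (x v : V n) : ℝ := Real.sqrt (S.gInner x v v)

/-- The sub-Riemannian Hamiltonian `H(p) = ½|p|²_{g*}`. -/
def ham (x p : V n) : ℝ := ⟪S.sharp x p, p⟫ / 2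

/-- The Hamiltonian vector field of `H` on `T*M = ℝⁿ × ℝⁿ` in canonical coordinates:
`ẋ = ∂H/∂p = ♯p`, `ṗ = −∂H/∂x`. -/
def hamVF (z : V n × V n) : V n × V n :=
  (S.sharp z.1 z.2, -gradient (fun y => S.ham y z.2) z.1)

/-- `(γ, λ)` satisfies the Hamiltonian (normal extremal) equations on `I`. -/
def IsExtremalOn (γ pp : ℝ → V n) (I : Set ℝ) : Prop :=
  ∀ t ∈ I, HasDerivAt γ (S.sharp (γ t) (pp t)) t ∧
    HasDerivAt pp (-gradient (fun y => S.ham y (pp t)) (γ t)) t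

/-- `γ` is a normal geodesic on `I`. -/
def IsNormalGeodesicOn (γ : ℝ → V n) (I : Set ℝ) : Prop :=
  ∃ pp, S.IsExtremalOn γ pp I

end SubRiemannian

/-- An affine connection on `TM`, recorded through its Christoffel symbols in the global
trivialisation: `∇_X Y = dY(X) + Γ(X, Y)`. -/
structure Connection (n : ℕ) where
  Γ : V n → V n →L[ℝ] V n →L[ℝ] V n

namespace Connection

variable (C : Connection n)

/-- Covariant derivative of the vector field `Y` at `x` in the direction `u`. -/
def covAt (x u : V n) (Y : V n → V n) : V n := fderiv ℝ Y x u + C.Γ x u (Y x)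

/-- Covariant derivative `∇_X Y`. -/
def cov (X Y : V n → V n) : V n → V n := fun x => C.covAt x (X x) Y

/-- The torsion `T(u,v)`. -/
def tor (x u v : V n) : V n := C.Γ x u v - C.Γ x v u

/-- The torsion as an operator in its second argument, `T_u = T(u, ·)`. -/
def torCLM (x u : V n) : V n →L[ℝ] V n := C.Γ x u - (C.Γ x).flip u

/-- The curvature operator `R(u,v) : TM → TM`. -/
def curvCLM (x u v : V n) : V n →L[ℝ] V n :=
  (fderiv ℝ C.Γ x u) v - (fderiv ℝ C.Γ x v) u
    + (C.Γ x u).comp (C.Γ x v) - (C.Γ x v).comp (C.Γ x u)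

/-- The curvature `R(u,v)w`. -/
def curv (x u v w : V n) : V n := C.curvCLM x u v w

/-- The adjoint connection `∇̂_X Y = ∇_X Y − T(X,Y)`; its Christoffel symbol is the flip of
`Γ`. -/
def adj : Connection n := ⟨fun x => (C.Γ x).flip⟩

/-- The covariant derivative `(∇_u T)(v,w)` of the torsion. -/
def covTor (x u v w : V n) : V n :=
  fderiv ℝ (fun y => C.tor y v w) x u + C.Γ x u (C.tor x v w)
    - C.tor x (C.Γ x u v) w - C.tor x v (C.Γ x u w)

/-- Covariant derivative of a vector field `Z` along a curve `γ`. -/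
def covAlong (γ Z : ℝ → V n) (t : ℝ) : V n := deriv Z t + C.Γ (γ t) (deriv γ t) (Z t)

/-- Covariant derivative of a one-form (identified with a vector field) along a curve. -/
def covFormAlong (γ p : ℝ → V n) (t : ℝ) : V n :=
  deriv p t - ContinuousLinearMap.adjoint (C.Γ (γ t) (deriv γ t)) (p t)

/-- Covariant derivative of a covector field. -/
def covFormAt (x u : V n) (β : V n → V n) : V n :=
  fderiv ℝ β x u - ContinuousLinearMap.adjoint (C.Γ x u) (β x)

/-- Horizontal lift (with respect to `C`) of the vector `v` at the covector `z = (x,p)`: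
the second component records the motion of a `C`-parallel covector. -/
def hlift (z : V n × V n) (v : V n) : V n × V n :=
  (v, ContinuousLinearMap.adjoint (C.Γ z.1 v) z.2)

/-- Covariant derivative along `γ` of a symmetric two-tensor (recorded as an operator
family) with respect to `C`. -/
def covSymAlong (γ : ℝ → V n) (Ss : ℝ → V n →L[ℝ] V n) (t : ℝ) : V n →L[ℝ] V n :=
  deriv Ss t - (Ss t).comp (C.Γ (γ t) (deriv γ t))
    - (ContinuousLinearMap.adjoint (C.Γ (γ t) (deriv γ t))).comp (Ss t)

end Connection

/-- The connection `C` is compatible with the sub-Riemannian structure: `∇♯ = ♯∇`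
(equivalently `∇g* = 0`, equivalently `𝓔` is parallel and `g` is preserved). -/
def Compatible (S : SubRiemannian n) (C : Connection n) : Prop :=
  ∀ x u p, (fderiv ℝ (fun y => S.sharp y) x u) p + C.Γ x u (S.sharp x p)
      + S.sharp x (ContinuousLinearMap.adjoint (C.Γ x u) p) = 0

namespace SubRiemannian

variable (S : SubRiemannian n) (C : Connection n)

/-- The operator `∂⃗ = (π*∇)_{H⃗}` acting on sections of `π* End TM` (recorded as plain
maps `T*M → (TM → TM)`). -/
def dEnd (F : V n × V n → V n → V n) (z : V n × V n) (u : V n) : V n :=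
  fderiv ℝ (fun w => F w u) z (S.hamVF z)
    + C.Γ z.1 (S.sharp z.1 z.2) (F z u) - F z (C.Γ z.1 (S.sharp z.1 z.2) u)

/-- The first twist polynomial `P₁|_p = −T(♯p, ·)`. -/
def P1f (z : V n × V n) (u : V n) : V n := -C.tor z.1 (S.sharp z.1 z.2) u

/-- The twist polynomials `P₀ = id`, `P_{k+1} = ∂⃗P_k + P₁ P_k`. -/
def twistP : ℕ → V n × V n → V n → V n
  | 0 => fun _ u => u
  | (k+1) => fun z u => S.dEnd C (twistP k) z u + S.P1f C z (twistP k z u)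

/-- The flag `𝔈^i_p = span{P_j|_p v : v ∈ 𝓔, 0 ≤ j ≤ i−1}`. -/
def twistFlag (i : ℕ) (z : V n × V n) : Submodule ℝ (V n) :=
  Submodule.span ℝ {v | ∃ j < i, ∃ u ∈ S.horiz z.1, S.twistP C j z u = v}

/-- `rank 𝔈^i_p`. -/
def twistRank (i : ℕ) (z : V n × V n) : ℕ := Module.finrank ℝ (S.twistFlag C i z)

/-- Ampleness at time `t` of the extremal `lam`, expressed through the twist flag. -/
def TwAmpleAt (lam : ℝ → V n × V n) (t : ℝ) : Prop := ∃ i, S.twistFlag C i (lam t) = ⊤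

/-- Equiregularity of the extremal `lam`, expressed through the twist flag. -/
def TwEquireg (lam : ℝ → V n × V n) : Prop :=
  ∀ i t t', S.twistRank C i (lam t) = S.twistRank C i (lam t')

/-- The tensor `A_p(v,w) = ½ p(T(v,w))`, contracted as `A♯(v) = ♯ A_p(v, ·)`. -/
def AfP (z : V n × V n) (v : V n) : V n :=
  (1/2 : ℝ) • S.sharp z.1 (ContinuousLinearMap.adjoint (C.torCLM z.1 v) z.2)

/-- `S♯(v) = ♯ S(v, ·)` for a symmetric two-tensor family `Ss` along a curve `γ`. -/
def Sf (Ss : ℝ → V n →L[ℝ] V n) (γ : ℝ → V n) (t : ℝ) (v : V n) : V n :=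
  S.sharp (γ t) (Ss t v)

/-- `D_t^S X = D̂_t X + A♯_λ(X) + S♯(X)` on vector fields along a geodesic `γ` with
extremal covector `pp`. -/
def DS (Ss : ℝ → V n →L[ℝ] V n) (γ pp : ℝ → V n) (X : ℝ → V n) (t : ℝ) : V n :=
  C.adj.covAlong γ X t + S.AfP C (γ t, pp t) (X t) + S.Sf Ss γ t (X t)

/-- `D_t^S α = D̂_t α + A_λ(♯α) − S(♯α)` on one-forms along the geodesic. -/
def DSform (Ss : ℝ → V n →L[ℝ] V n) (γ pp : ℝ → V n) (α : ℝ → V n) (t : ℝ) : V n :=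
  C.adj.covFormAlong γ α t
    + (1/2 : ℝ) • ContinuousLinearMap.adjoint (C.torCLM (γ t) (S.sharp (γ t) (α t))) (pp t)
    - Ss t (S.sharp (γ t) (α t))

/-- The quadratic form `𝔯^S_γ(X,X) = λ R(γ̇,X)X + λ(∇_X T)(γ̇,X) + |S♯X + A♯X|²_g −
(D̂_t S)(X,X)` of the canonical curvature. -/
def frakQ (Ss : ℝ → V n →L[ℝ] V n) (γ pp : ℝ → V n) (t : ℝ) (v : V n) : ℝ :=
  ⟪pp t, C.curv (γ t) (deriv γ t) v v⟫
  + ⟪pp t, C.covTor (γ t) v (deriv γ t) v⟫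
  + S.gInner (γ t) (S.Sf Ss γ t v + S.AfP C (γ t, pp t) v) (S.Sf Ss γ t v + S.AfP C (γ t, pp t) v)
  - ⟪C.adj.covSymAlong γ Ss t v, v⟫

/-- The symmetric bilinear form `𝔯^S_γ` obtained from `frakQ` by polarisation. -/
def frakB (Ss : ℝ → V n →L[ℝ] V n) (γ pp : ℝ → V n) (t : ℝ) (v w : V n) : ℝ :=
  (S.frakQ C Ss γ pp t (v + w) - S.frakQ C Ss γ pp t v - S.frakQ C Ss γ pp t w) / 2

end SubRiemannian

/-- Length of the `b`-th row of the Young diagram `𝕐(d 1, …, d s)`. -/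
def rowLen (d : ℕ → ℕ) (s a : ℕ) : ℕ := ((Finset.Icc 1 s).filter fun b => a ≤ d b).card

end SR

/-
Differentiating `H(x, p) = ½ ⟪♯ₓ p, p⟫` in `x` and using compatibility `∇♯ = ♯∇` together with
the symmetry of `♯` gives `∂ₓH(x, p) = -p(Γ(·, ♯ₓ p))`. The adjoint connection has Christoffel
symbol `Γ̂(u, v) = Γ(v, u)`, so along a curve with `γ̇ = ♯λ` Hamilton's equation `λ̇ = -∂ₓH`
reads `λ̇ = λ ∘ Γ̂(γ̇, ·)`, which is `D̂ₜλ = 0`.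
-/

namespace SR

open ContinuousLinearMap InnerProductSpace

variable {n : ℕ}

namespace SubRiemannian

variable (S : SubRiemannian n)

theorem fderiv_ham_apply (x p u : V n) :
    fderiv ℝ (fun y => S.ham y p) x u = ⟪(fderiv ℝ (fun y => S.sharp y) x u) p, p⟫ / 2 := by
  have hsharp : HasFDerivAt (fun y => S.sharp y) (fderiv ℝ (fun y => S.sharp y) x) x :=
    (S.smooth.differentiable (by simp) x).hasFDerivAt
  have hinner : HasFDerivAt (fun y => ⟪S.sharp y p, p⟫) _ x :=
    (hsharp.clm_apply (hasFDerivAt_const p x)).inner ℝ (hasFDerivAt_const p x)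
  have hham : (fun y => S.ham y p) = fun y => ⟪S.sharp y p, p⟫ * 2⁻¹ := by
    simp only [ham, div_eq_mul_inv]
  rw [hham, (hinner.mul_const 2⁻¹).fderiv]
  simp [div_eq_inv_mul]

theorem inner_gradient_ham (x p u : V n) :
    ⟪gradient (fun y => S.ham y p) x, u⟫ = ⟪(fderiv ℝ (fun y => S.sharp y) x u) p, p⟫ / 2 := by
  rw [← toDual_apply_apply, toDual_gradient, fderiv_ham_apply]

variable {S} {C : Connection n}

theorem gradient_ham_of_compatible (hcomp : Compatible S C) (x p : V n) :
    gradient (fun y => S.ham y p) x = -adjoint (C.adj.Γ x (S.sharp x p)) p := by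
  refine ext_inner_right ℝ fun u => ?_
  have hsharp : (fderiv ℝ (fun y => S.sharp y) x u) p
      = -C.Γ x u (S.sharp x p) - S.sharp x (adjoint (C.Γ x u) p) := by
    linear_combination (norm := module) hcomp x u p
  have hsymm : ⟪S.sharp x (adjoint (C.Γ x u) p), p⟫ = ⟪C.Γ x u (S.sharp x p), p⟫ := by
    rw [S.symm, real_inner_comm, adjoint_inner_right]
  rw [inner_gradient_ham, hsharp, inner_neg_left, adjoint_inner_left, inner_sub_left,
    inner_neg_left, hsymm, real_inner_comm]
  simp only [Connection.adj, flip_apply]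
  ring

theorem hamilton_equations_iff_parallel (hcomp : Compatible S C) (γ lam : ℝ → V n) (t : ℝ) :
    (HasDerivAt γ (S.sharp (γ t) (lam t)) t ∧
        HasDerivAt lam (-gradient (fun y => S.ham y (lam t)) (γ t)) t) ↔
      (DifferentiableAt ℝ γ t ∧ DifferentiableAt ℝ lam t) ∧
        C.adj.covFormAlong γ lam t = 0 ∧ S.sharp (γ t) (lam t) = deriv γ t := by
  rw [gradient_ham_of_compatible hcomp, neg_neg, Connection.covFormAlong, sub_eq_zero]
  constructor
  · rintro ⟨hγ, hlam⟩
    exact ⟨⟨hγ.differentiableAt, hlam.differentiableAt⟩, by rw [hlam.deriv, hγ.deriv],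
      hγ.deriv.symm⟩
  · rintro ⟨⟨hγ, hlam⟩, hparallel, hvelocity⟩
    rw [hvelocity, ← hparallel]
    exact ⟨hγ.hasDerivAt, hlam.hasDerivAt⟩

theorem isExtremalOn_iff_parallel (hcomp : Compatible S C) (γ lam : ℝ → V n) (I : Set ℝ) :
    S.IsExtremalOn γ lam I ↔
      (∀ t ∈ I, DifferentiableAt ℝ γ t ∧ DifferentiableAt ℝ lam t) ∧
        ∀ t ∈ I, C.adj.covFormAlong γ lam t = 0 ∧ S.sharp (γ t) (lam t) = deriv γ t := by
  simp only [IsExtremalOn, hamilton_equations_iff_parallel hcomp, forall₂_and]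

end SubRiemannian

theorem normal_geodesic_iff_parallel_coform_general
    {n : ℕ} (S : SubRiemannian n)
    (C : Connection n) (hcomp : Compatible S C)
    (t₁ : ℝ) (γ : ℝ → V n) :
    (S.IsNormalGeodesicOn γ (Set.Icc 0 t₁) ↔
      ∃ lam : ℝ → V n, (∀ t ∈ Set.Icc 0 t₁, DifferentiableAt ℝ γ t ∧ DifferentiableAt ℝ lam t) ∧
        ∀ t ∈ Set.Icc 0 t₁,
          C.adj.covFormAlong γ lam t = 0 ∧ S.sharp (γ t) (lam t) = deriv γ t) ∧
    (∀ lam : ℝ → V n,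
      (∀ t ∈ Set.Icc 0 t₁, DifferentiableAt ℝ γ t ∧ DifferentiableAt ℝ lam t) →
      (∀ t ∈ Set.Icc 0 t₁,
          C.adj.covFormAlong γ lam t = 0 ∧ S.sharp (γ t) (lam t) = deriv γ t) →
      S.IsExtremalOn γ lam (Set.Icc 0 t₁)) :=
  ⟨exists_congr fun lam => SubRiemannian.isExtremalOn_iff_parallel hcomp γ lam _,
    fun lam hdiff hparallel =>
      (SubRiemannian.isExtremalOn_iff_parallel hcomp γ lam _).2 ⟨hdiff, hparallel⟩⟩

theorem normal_geodesic_iff_parallel_coform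
    {n : ℕ} (S : SubRiemannian n) (hbg : S.BracketGenerating)
    (C : Connection n) (hC : ContDiff ℝ (⊤ : ℕ∞) C.Γ) (hcomp : Compatible S C)
    (t₁ : ℝ) (ht₁ : 0 ≤ t₁) (γ : ℝ → V n) :
    (S.IsNormalGeodesicOn γ (Set.Icc 0 t₁) ↔
      ∃ lam : ℝ → V n, (∀ t ∈ Set.Icc 0 t₁, DifferentiableAt ℝ γ t ∧ DifferentiableAt ℝ lam t) ∧
        ∀ t ∈ Set.Icc 0 t₁,
          C.adj.covFormAlong γ lam t = 0 ∧ S.sharp (γ t) (lam t) = deriv γ t) ∧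
    (∀ lam : ℝ → V n,
      (∀ t ∈ Set.Icc 0 t₁, DifferentiableAt ℝ γ t ∧ DifferentiableAt ℝ lam t) →
      (∀ t ∈ Set.Icc 0 t₁,
          C.adj.covFormAlong γ lam t = 0 ∧ S.sharp (γ t) (lam t) = deriv γ t) →
      S.IsExtremalOn γ lam (Set.Icc 0 t₁)) :=
  normal_geodesic_iff_parallel_coform_general S C hcomp t₁ γ

end SR
end
end

section
/- Let (W, ω) be a symplectic vector space and Λ(t) a smooth curve in the Lagrangian Grassmannian L(W). If Λ(t) is equiregular of step s, then for every j = 1, …, s−1 one has d_j ≥ d_{j+1}, where d_j = k_j − k_{j−1} and k_i(t) = dim Λ^{(i)}(t). -/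
/-!
Fix `t` and `j ≥ 1`, and let `K = Λ^{(j-1)}(t) ≤ A = Λ^{(j)}(t)`. Choose derivatives
`z_1^{(j)}(t), …, z_m^{(j)}(t)` of sections of `Λ` spanning `A` modulo `K`, with
`m ≤ k_j - k_{j-1}`. Together with all derivatives of order `≤ j - 1` they form a family of smooth
sections of `Λ^{(j)}` whose values at `t` span `A`, and only the `m` sections `z_i^{(j)}` may
have derivatives at `t` outside `A`.

Since `k_j` is constant, a basis of `A` drawn from this family remains a basis of `Λ^{(j)}(s)`
for `s` near `t` (its coordinate matrix under a left inverse at `t` stays invertible), and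
Cramer's rule expresses every smooth section of `Λ^{(j)}` in it with coefficients differentiable
at `t`. By the product rule every derivative of order `j + 1` at `t` lies in
`A + span{z_i^{(j+1)}(t)}`, so `k_{j+1} ≤ k_j + m ≤ 2 k_j - k_{j-1}`.
-/

noncomputable section

namespace LG

variable {W : Type*} [NormedAddCommGroup W] [NormedSpace ℝ W]

/-- The `i`-th extension `Λ^{(i)}(t)` of a curve of subspaces: the span of all derivatives of
order `≤ i` at `t` of smooth curves `z` with `z(s) ∈ Λ(s)` for all `s`. -/
def ext (Λ : ℝ → Submodule ℝ W) (i : ℕ) (t : ℝ) : Submodule ℝ W :=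
  Submodule.span ℝ
    {v | ∃ (z : ℝ → W) (j : ℕ), j ≤ i ∧ ContDiff ℝ (⊤ : ℕ∞) z ∧ (∀ s, z s ∈ Λ s) ∧
      iteratedDeriv j z t = v}

/-- `k_i(t) = dim Λ^{(i)}(t)`. -/
def kdim (Λ : ℝ → Submodule ℝ W) (i : ℕ) (t : ℝ) : ℕ := Module.finrank ℝ (ext Λ i t)

/-- A subspace is Lagrangian when it coincides with its symplectic complement. -/
def IsLagrangian (ω : W →ₗ[ℝ] W →ₗ[ℝ] ℝ) (L : Submodule ℝ W) : Prop :=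
  ∀ v, v ∈ L ↔ ∀ w ∈ L, ω v w = 0

/-- A smooth curve of subspaces: through every point of every fibre there passes a smooth
global section. -/
def IsSmoothCurve (Λ : ℝ → Submodule ℝ W) : Prop :=
  ∀ t v, v ∈ Λ t → ∃ z : ℝ → W, ContDiff ℝ (⊤ : ℕ∞) z ∧ (∀ s, z s ∈ Λ s) ∧ z t = v

/-- Equiregular: each `k_i` is constant. -/
def Equiregular (Λ : ℝ → Submodule ℝ W) : Prop := ∀ i t t', kdim Λ i t = kdim Λ i t'

/-- `s` is the step of the curve: the minimal `i` such that `Λ^{(j)} = Λ^{(i)}` for all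
`j ≥ i`. -/
def IsStep (Λ : ℝ → Submodule ℝ W) (s : ℕ) : Prop :=
  (∀ t j, s ≤ j → ext Λ j t = ext Λ s t) ∧
    ∀ s', (∀ t j, s' ≤ j → ext Λ j t = ext Λ s' t) → s ≤ s'

end LG

open Module Submodule Set Filter Topology Matrix

section LinearAlgebra

variable {K V : Type*} [DivisionRing K] [AddCommGroup V] [Module K V] [FiniteDimensional K V]

theorem exists_finset_sup_span_image_eq {ι : Type*} (g : ι → V) (U : Submodule K V) :
    ∃ T : Finset ι, U ⊔ span K (g '' T) = U ⊔ span K (range g) ∧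
      finrank K U + T.card ≤ finrank K ↥(U ⊔ span K (range g)) := by
  classical
  induction U using WellFoundedGT.induction with
  | _ U ih =>
  by_cases hg : ∀ i, g i ∈ U
  · have hU : U ⊔ span K (range g) = U := sup_eq_left.2 (span_le.2 (range_subset_iff.2 hg))
    exact ⟨∅, by simp [hU], by simpa using Submodule.finrank_mono le_sup_left⟩
  · push Not at hg
    obtain ⟨i, hi⟩ := hg
    have hlt : U < U ⊔ K ∙ g i :=
      left_lt_sup.2 fun h => hi (h (mem_span_singleton_self _))
    obtain ⟨T, hT, hcard⟩ := ih _ hlt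
    have hgi : U ⊔ K ∙ g i ⊔ span K (range g) = U ⊔ span K (range g) := by
      rw [sup_assoc, sup_eq_right (a := K ∙ g i) |>.2
        (span_mono (singleton_subset_iff.2 (mem_range_self i)))]
    refine ⟨insert i T, ?_, ?_⟩
    · rw [← hgi, ← hT, Finset.coe_insert, image_insert_eq, span_insert, sup_assoc]
    · have hrank := finrank_lt_finrank_of_lt hlt
      have hins := T.card_insert_le i
      rw [hgi] at hcard
      omega

end LinearAlgebra

section MatrixCalculus

variable {𝕜 E : Type*} [NontriviallyNormedField 𝕜] [NormedAddCommGroup E] [NormedSpace 𝕜 E]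
  {n : Type*} [Fintype n] [DecidableEq n] {A : E → Matrix n n 𝕜} {x : E}

theorem DifferentiableAt.matrix_det (hA : ∀ i j, DifferentiableAt 𝕜 (fun y => A y i j) x) :
    DifferentiableAt 𝕜 (fun y => (A y).det) x := by
  simp only [Matrix.det_apply']
  fun_prop

theorem DifferentiableAt.matrix_inv_mulVec {b : E → n → 𝕜}
    (hA : ∀ i j, DifferentiableAt 𝕜 (fun y => A y i j) x)
    (hb : ∀ i, DifferentiableAt 𝕜 (fun y => b y i) x) (hdet : (A x).det ≠ 0) :
    DifferentiableAt 𝕜 (fun y => (A y)⁻¹ *ᵥ b y) x := by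
  -- Cramer's rule, valid for all `y` because `0⁻¹ = 0` on both sides
  have hcramer : ∀ y, (A y)⁻¹ *ᵥ b y = (A y).det⁻¹ • (A y).cramer (b y) := fun y => by
    rw [Matrix.inv_def, Ring.inverse_eq_inv', Matrix.smul_mulVec, Matrix.cramer_eq_adjugate_mulVec]
  simp only [hcramer]
  refine differentiableAt_pi.2 fun i => ?_
  simp only [Pi.smul_apply, smul_eq_mul, Matrix.cramer_apply]
  refine (DifferentiableAt.matrix_det hA).inv hdet |>.mul (.matrix_det fun k l => ?_)
  simp only [Matrix.updateCol_apply]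
  split_ifs
  exacts [hb k, hA k l]

end MatrixCalculus

section FrameCoefficients

variable {K V : Type*} [Field K] [AddCommGroup V] [Module K V] [FiniteDimensional K V]
  {ι : Type*} [Fintype ι] [DecidableEq ι]

theorem eq_sum_inv_mulVec_smul (P : V →ₗ[K] ι → K) {Γ : Submodule K V} {w : ι → V}
    (hw : ∀ k, w k ∈ Γ) (hdim : finrank K Γ ≤ Fintype.card ι)
    (hdet : (Matrix.of fun i k => P (w k) i).det ≠ 0) {y : V} (hy : y ∈ Γ) :
    y = ∑ k, ((Matrix.of fun i k => P (w k) i)⁻¹ *ᵥ P y) k • w k := by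
  set M : Matrix ι ι K := Matrix.of fun i k => P (w k) i
  have hM : ∀ c, M *ᵥ c = P (∑ k, c k • w k) := fun c => by
    ext i; simp [M, Matrix.mulVec, dotProduct, map_sum, mul_comm]
  have hind : LinearIndependent K w := Fintype.linearIndependent_iff.2 fun c hc =>
    congrFun (Matrix.eq_zero_of_mulVec_eq_zero hdet (by rw [hM, hc, map_zero]))
  have hspan : span K (range w) = Γ := by
    refine eq_of_le_of_finrank_le (span_le.2 (range_subset_iff.2 hw)) ?_
    rwa [finrank_span_eq_card hind]
  obtain ⟨c, rfl⟩ := (mem_span_range_iff_exists_fun K).1 (hspan ▸ hy)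
  rw [← hM, Matrix.mulVec_mulVec, Matrix.nonsing_inv_mul _ (isUnit_iff_ne_zero.2 hdet),
    Matrix.one_mulVec]

end FrameCoefficients

section Frames

variable {W : Type*} [NormedAddCommGroup W] [NormedSpace ℝ W]

theorem deriv_mem_sup_of_eventuallyEq_sum_smul {ι : Type*} [Fintype ι] {v : ι → ℝ → W}
    {β : ℝ → ι → ℝ} {y : ℝ → W} {t₀ : ℝ} (hv : ∀ k, DifferentiableAt ℝ (v k) t₀)
    (hβ : DifferentiableAt ℝ β t₀) (hy : y =ᶠ[𝓝 t₀] fun s => ∑ k, β s k • v k s) :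
    deriv y t₀ ∈ span ℝ (range fun k => v k t₀) ⊔ span ℝ (range fun k => deriv (v k) t₀) := by
  have hβk : ∀ k, DifferentiableAt ℝ (fun s => β s k) t₀ := differentiableAt_pi.1 hβ
  rw [hy.deriv_eq,
    deriv_fun_sum (A := fun k s => β s k • v k s) fun k _ => (hβk k).fun_smul (hv k)]
  refine sum_mem fun k _ => ?_
  rw [deriv_fun_smul (hβk k) (hv k)]
  exact add_mem (mem_sup_right (smul_mem _ _ (subset_span ⟨k, rfl⟩)))
    (mem_sup_left (smul_mem _ _ (subset_span ⟨k, rfl⟩)))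

variable [FiniteDimensional ℝ W]

theorem deriv_mem_sup_of_linearIndependent {ι : Type*} [Fintype ι] {Γ : ℝ → Submodule ℝ W}
    {t₀ : ℝ} {v : ι → ℝ → W} (hv : ∀ k, DifferentiableAt ℝ (v k) t₀)
    (hv_mem : ∀ k s, v k s ∈ Γ s) (hind : LinearIndependent ℝ fun k => v k t₀)
    (hdim : ∀ᶠ s in 𝓝 t₀, finrank ℝ (Γ s) ≤ Fintype.card ι) {y : ℝ → W}
    (hy : DifferentiableAt ℝ y t₀) (hy_mem : ∀ s, y s ∈ Γ s) :
    deriv y t₀ ∈ span ℝ (range fun k => v k t₀) ⊔ span ℝ (range fun k => deriv (v k) t₀) := by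
  classical
  obtain ⟨P, hP⟩ := LinearMap.exists_leftInverse_of_injective
    (Fintype.linearCombination ℝ fun k => v k t₀)
    (LinearMap.ker_eq_bot.2 hind.fintypeLinearCombination_injective)
  have hPd : ∀ {f : ℝ → W}, DifferentiableAt ℝ f t₀ → DifferentiableAt ℝ (fun s => P (f s)) t₀ :=
    fun hf => (LinearMap.toContinuousLinearMap P).differentiableAt.comp t₀ hf
  set M : ℝ → Matrix ι ι ℝ := fun s => Matrix.of fun i k => P (v k s) i
  have hM : ∀ i k, DifferentiableAt ℝ (fun s => M s i k) t₀ := fun i k =>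
    differentiableAt_pi.1 (hPd (hv k)) i
  have hM₀ : (M t₀).det ≠ 0 := by
    have : M t₀ = 1 := by
      ext i k
      have := congrFun (LinearMap.congr_fun hP (Pi.single k 1)) i
      simp only [LinearMap.comp_apply, Fintype.linearCombination_apply_single, one_smul,
        LinearMap.id_apply] at this
      simp [M, this, Matrix.one_apply, Pi.single_apply]
    simp [this]
  have hdet : ∀ᶠ s in 𝓝 t₀, (M s).det ≠ 0 :=
    (DifferentiableAt.matrix_det hM).continuousAt.eventually_ne hM₀
  refine deriv_mem_sup_of_eventuallyEq_sum_smul hv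
    (DifferentiableAt.matrix_inv_mulVec hM (differentiableAt_pi.1 (hPd hy)) hM₀) ?_
  filter_upwards [hdet, hdim] with s hs hsd
  exact eq_sum_inv_mulVec_smul P (fun k => hv_mem k s) hsd hs (hy_mem s)

theorem deriv_mem_sup_of_le_span {ι : Type*} {Γ : ℝ → Submodule ℝ W} {t₀ : ℝ}
    {u : ι → ℝ → W} (hu : ∀ k, DifferentiableAt ℝ (u k) t₀) (hu_mem : ∀ k s, u k s ∈ Γ s)
    (hspan : Γ t₀ ≤ span ℝ (range fun k => u k t₀))
    (hdim : ∀ᶠ s in 𝓝 t₀, finrank ℝ (Γ s) ≤ finrank ℝ (Γ t₀)) {y : ℝ → W}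
    (hy : DifferentiableAt ℝ y t₀) (hy_mem : ∀ s, y s ∈ Γ s) :
    deriv y t₀ ∈ span ℝ (range fun k => u k t₀) ⊔ span ℝ (range fun k => deriv (u k) t₀) := by
  obtain ⟨κ, a, -, hspan', hind⟩ := exists_linearIndependent' ℝ fun k => u k t₀
  have := hind.finite
  have := Fintype.ofFinite κ
  have hcard : finrank ℝ (Γ t₀) ≤ Fintype.card κ := by
    rw [← finrank_span_eq_card hind, hspan']
    exact Submodule.finrank_mono hspan
  have h := deriv_mem_sup_of_linearIndependent (fun k => hu (a k)) (fun k => hu_mem (a k)) hind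
    (hdim.mono fun s hs => hs.trans hcard) hy hy_mem
  exact sup_le_sup (α := Submodule ℝ W) (span_mono (range_comp_subset_range a fun k => u k t₀))
    (span_mono (range_comp_subset_range a fun k => deriv (u k) t₀)) h

end Frames

namespace LG

variable {W : Type*} [NormedAddCommGroup W] [NormedSpace ℝ W]

lemma ext_mono (Λ : ℝ → Submodule ℝ W) {i i' : ℕ} (h : i ≤ i') (t : ℝ) :
    ext Λ i t ≤ ext Λ i' t :=
  span_mono fun _ ⟨z, a, ha, h1, h2, h3⟩ => ⟨z, a, ha.trans h, h1, h2, h3⟩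

structure SectionDeriv (Λ : ℝ → Submodule ℝ W) (n : ℕ) where
  order : ℕ
  sec : ℝ → W
  order_le : order ≤ n
  contDiff : ContDiff ℝ (⊤ : ℕ∞) sec
  mem : ∀ s, sec s ∈ Λ s

namespace SectionDeriv

variable {Λ : ℝ → Submodule ℝ W} {n : ℕ}

def eval (p : SectionDeriv Λ n) : ℝ → W := iteratedDeriv p.order p.sec

theorem differentiable_eval (p : SectionDeriv Λ n) : Differentiable ℝ p.eval :=
  p.contDiff.differentiable_iteratedDeriv _ (by exact_mod_cast ENat.natCast_lt_top _)

theorem eval_mem_ext (p : SectionDeriv Λ n) (s : ℝ) : p.eval s ∈ ext Λ n s :=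
  subset_span ⟨p.sec, p.order, p.order_le, p.contDiff, p.mem, rfl⟩

theorem deriv_eval_mem_ext (p : SectionDeriv Λ n) (s : ℝ) : deriv p.eval s ∈ ext Λ (n + 1) s := by
  rw [eval, ← iteratedDeriv_succ]
  exact subset_span ⟨p.sec, p.order + 1, Nat.succ_le_succ p.order_le, p.contDiff, p.mem, rfl⟩

end SectionDeriv

theorem ext_eq_span_range_eval (Λ : ℝ → Submodule ℝ W) (n : ℕ) (t : ℝ) :
    ext Λ n t = span ℝ (range fun p : SectionDeriv Λ n => p.eval t) := by
  refine congrArg _ (Set.ext fun v => ⟨?_, ?_⟩)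
  · rintro ⟨z, a, ha, hz, hzΛ, rfl⟩
    exact ⟨⟨a, z, ha, hz, hzΛ⟩, rfl⟩
  · rintro ⟨⟨a, z, ha, hz, hzΛ⟩, rfl⟩
    exact ⟨z, a, ha, hz, hzΛ, rfl⟩

theorem ext_succ_le {Λ : ℝ → Submodule ℝ W} {n : ℕ} {t : ℝ} {S : Submodule ℝ W}
    (hS : ext Λ n t ≤ S)
    (hderiv : ∀ y : ℝ → W, Differentiable ℝ y → (∀ s, y s ∈ ext Λ n s) → deriv y t ∈ S) :
    ext Λ (n + 1) t ≤ S := by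
  rw [ext_eq_span_range_eval]
  refine span_le.2 (range_subset_iff.2 fun ⟨a, z, ha, hz, hzΛ⟩ => ?_)
  obtain ha | rfl := Nat.le_succ_iff.1 ha
  · exact hS (SectionDeriv.eval_mem_ext ⟨a, z, ha, hz, hzΛ⟩ t)
  · let q : SectionDeriv Λ n := ⟨n, z, le_rfl, hz, hzΛ⟩
    show iteratedDeriv (n + 1) z t ∈ S
    rw [iteratedDeriv_succ]
    exact hderiv q.eval q.differentiable_eval q.eval_mem_ext

theorem ext_succ_le_sup_span_deriv [FiniteDimensional ℝ W] {Λ : ℝ → Submodule ℝ W} {j : ℕ}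
    (hj : 1 ≤ j) {t : ℝ} (hconst : ∀ s, kdim Λ j s ≤ kdim Λ j t) (T : Finset (SectionDeriv Λ j))
    (hT : ext Λ (j - 1) t ⊔ span ℝ ((fun p : SectionDeriv Λ j => p.eval t) '' T) = ext Λ j t) :
    ext Λ (j + 1) t ≤
      ext Λ j t ⊔ span ℝ (range fun p : (T : Set (SectionDeriv Λ j)) => deriv p.1.eval t) := by
  -- a frame of `ext Λ j` whose derivatives at `t` stay in `ext Λ j t`, except those indexed by `T`
  let u : SectionDeriv Λ (j - 1) ⊕ (T : Set (SectionDeriv Λ j)) → ℝ → W :=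
    Sum.elim SectionDeriv.eval fun p => p.1.eval
  have hu_mem : ∀ k s, u k s ∈ ext Λ j s := by
    rintro (p | p) s
    exacts [ext_mono Λ (Nat.sub_le j 1) s (p.eval_mem_ext s), p.1.eval_mem_ext s]
  have hspan : ext Λ j t ≤ span ℝ (range fun k => u k t) := by
    have : (fun k => u k t) = Sum.elim (fun p => p.eval t) fun p => p.1.eval t := by
      ext (p | p) <;> rfl
    rw [this, Set.Sum.elim_range, span_union, ← ext_eq_span_range_eval, ← hT, Set.image_eq_range]
  refine ext_succ_le le_sup_left fun y hy hyΛ => ?_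
  refine sup_le (α := Submodule ℝ W) (span_le.2 ?_) (span_le.2 ?_) (deriv_mem_sup_of_le_span
    (fun k => ?_) hu_mem hspan (.of_forall hconst) (hy t) hyΛ)
  · rintro _ ⟨k, rfl⟩
    exact mem_sup_left (hu_mem k t)
  · rintro _ ⟨p | p, rfl⟩
    · exact mem_sup_left (ext_mono Λ (by omega) t (p.deriv_eval_mem_ext t))
    · exact mem_sup_right (subset_span ⟨p, rfl⟩)
  · rcases k with p | p
    exacts [p.differentiable_eval t, p.1.differentiable_eval t]

theorem dim_increments_antitone_general [FiniteDimensional ℝ W]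
    (Λ : ℝ → Submodule ℝ W)
    (s : ℕ)
    (hequi : Equiregular Λ) :
    ∀ (t : ℝ) (j : ℕ), 1 ≤ j → j ≤ s - 1 →
      (kdim Λ (j+1) t : ℤ) - (kdim Λ j t : ℤ) ≤ (kdim Λ j t : ℤ) - (kdim Λ (j-1) t : ℤ) := by
  intro t j hj _
  obtain ⟨T, hT, hcard⟩ :=
    exists_finset_sup_span_image_eq (fun p : SectionDeriv Λ j => p.eval t) (ext Λ (j - 1) t)
  rw [← ext_eq_span_range_eval, sup_eq_right.2 (ext_mono Λ (Nat.sub_le j 1) t)] at hT hcard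
  have hnext := ext_succ_le_sup_span_deriv hj (fun s => (hequi j s t).le) T hT
  have hD : finrank ℝ (span ℝ (range fun p : (T : Set (SectionDeriv Λ j)) =>
      deriv p.1.eval t)) ≤ T.card :=
    (finrank_range_le_card _).trans_eq (by simp)
  have hnext_card : kdim Λ (j + 1) t ≤ kdim Λ j t + T.card :=
    (Submodule.finrank_mono hnext).trans
      ((Submodule.finrank_add_le_finrank_add_finrank _ _).trans (Nat.add_le_add_left hD _))
  have hcard' : kdim Λ (j - 1) t + T.card ≤ kdim Λ j t := hcard
  omega

/-- **Lemma 4.2** (`lemma:FStructure`): for an equiregular smooth curve of Lagrangian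
subspaces of step `s`, the increments `d_j = k_j − k_{j−1}` are non-increasing for
`j = 1, …, s − 1`. -/
theorem dim_increments_antitone [FiniteDimensional ℝ W]
    (ω : W →ₗ[ℝ] W →ₗ[ℝ] ℝ)
    (halt : ∀ v, ω v v = 0)
    (hnondeg : ∀ v, (∀ w, ω v w = 0) → v = 0)
    (Λ : ℝ → Submodule ℝ W)
    (hsm : IsSmoothCurve Λ)
    (hlag : ∀ t, IsLagrangian ω (Λ t))
    (s : ℕ) (hstep : IsStep Λ s)
    (hequi : Equiregular Λ) :
    ∀ (t : ℝ) (j : ℕ), 1 ≤ j → j ≤ s - 1 →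
      (kdim Λ (j+1) t : ℤ) - (kdim Λ j t : ℤ) ≤ (kdim Λ j t : ℤ) - (kdim Λ (j-1) t : ℤ) :=
  dim_increments_antitone_general Λ s hequi

end LG
end
end

section
/- Let (M, 𝓔, g) be a sub-Riemannian manifold with compatible connection ∇, adjoint ∇̂, and twist polynomials P_k. Let γ(t) = exp(tp) be a normal geodesic with extremal λ(t). Then: (a) for every vector field X(t) along γ and k ≥ 0, D̂_t (P_k|_{λ(t)} X(t)) = P_k|_{λ(t)} D_t X(t) + P_{k+1}|_{λ(t)} X(t); (b) if //_t and //̂_t : T_{γ(0)}M → T_{γ(t)}M denote parallel transport along γ with respect to ∇ and ∇̂ respectively, then P_k|_p = (d^k/dt^k)( //̂_t^{−1} ∘ //_t )|_{t=0}. -/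
noncomputable section
open scoped RealInnerProductSpace
open Classical

/-!
Write `Tₖ = twistCLM k` for the twist polynomial `P_k` viewed as a field of operators on `T*M`,
and `A = Γ(γ̇)`, `Â = Γ̂(γ̇)` for the Christoffel operators of `∇` and `∇̂` along `γ`.  Since
`λ̇ = H⃗(λ)`, the recursion `P_{k+1} = ∂⃗P_k + P₁P_k` says exactly that along the extremal
`d/dt Tₖ(λ) = T_{k+1}(λ) − Â Tₖ(λ) + Tₖ(λ) A`, i.e. `T_{k+1}` is the covariant derivative of
`Tₖ` taken with `∇̂` on the target and `∇` on the source.  Part (a) is this identity applied to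
`X`.  For (b), the transports satisfy `//̇ = −A //` and `(//̂⁻¹)˙ = //̂⁻¹ Â`, so the same identity
gives `d/dt (//̂⁻¹ Tₖ //) = //̂⁻¹ T_{k+1} //`, and at `t = 0` both transports are the identity.
-/

theorem hasDerivAt_inverse_of_hasDerivAt_neg_comp {𝕜 E : Type*} [NontriviallyNormedField 𝕜]
    [NormedAddCommGroup E] [NormedSpace 𝕜 E] {Q R : 𝕜 → E →L[𝕜] E} {B : E →L[𝕜] E}
    {t : 𝕜} (hQ : HasDerivAt Q (-B.comp (Q t)) t) (hR : DifferentiableAt 𝕜 R t)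
    (hRQ : ∀ s, (R s).comp (Q s) = ContinuousLinearMap.id 𝕜 E)
    (hQR : (Q t).comp (R t) = ContinuousLinearMap.id 𝕜 E) :
    HasDerivAt R ((R t).comp B) t := by
  have hconst : HasDerivAt (fun s => (R s).comp (Q s)) 0 t := by
    simpa only [hRQ] using hasDerivAt_const t (ContinuousLinearMap.id 𝕜 E)
  have hprod : deriv R t ∘L Q t - R t ∘L B ∘L Q t = 0 := by
    rw [hconst.unique (hR.hasDerivAt.clm_comp hQ), ContinuousLinearMap.comp_neg,
      ← sub_eq_add_neg]
  have hderiv : deriv R t = R t ∘L B := by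
    simpa only [ContinuousLinearMap.sub_comp, ContinuousLinearMap.comp_assoc, hQR,
      ContinuousLinearMap.comp_id, ContinuousLinearMap.zero_comp, sub_eq_zero]
      using congrArg (· ∘L R t) hprod
  exact hderiv ▸ hR.hasDerivAt

theorem iteratedDeriv_eq_of_hasDerivAt_succ {𝕜 F : Type*} [NontriviallyNormedField 𝕜]
    [NormedAddCommGroup F] [NormedSpace 𝕜 F] {G : ℕ → 𝕜 → F}
    (hG : ∀ k t, HasDerivAt (G k) (G (k + 1) t) t) (k : ℕ) :
    iteratedDeriv k (G 0) = G k := by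
  induction k with
  | zero => exact iteratedDeriv_zero
  | succ k ih => exact funext fun t => by rw [iteratedDeriv_succ, ih, (hG k t).deriv]

theorem ContDiff.clm_flip {𝕜 D E F G : Type*} [NontriviallyNormedField 𝕜]
    [NormedAddCommGroup D] [NormedSpace 𝕜 D] [NormedAddCommGroup E] [NormedSpace 𝕜 E]
    [NormedAddCommGroup F] [NormedSpace 𝕜 F] [NormedAddCommGroup G] [NormedSpace 𝕜 G]
    {m : WithTop ℕ∞} {f : D → E →L[𝕜] F →L[𝕜] G} (hf : ContDiff 𝕜 m f) :
    ContDiff 𝕜 m fun x => (f x).flip := by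
  have hflip : ContDiff 𝕜 m (ContinuousLinearMap.flipₗᵢ 𝕜 E F G) :=
    LinearIsometryEquiv.contDiff (F := F →L[𝕜] E →L[𝕜] G) _
  exact hflip.comp hf

namespace SR

namespace SubRiemannian

variable {n : ℕ}

theorem IsExtremalOn.hasDerivAt {S : SubRiemannian n} {γ pp : ℝ → V n} {I : Set ℝ}
    (hext : S.IsExtremalOn γ pp I) {t : ℝ} (ht : t ∈ I) :
    HasDerivAt (fun s => (γ s, pp s)) (S.hamVF (γ t, pp t)) t :=
  (hext t ht).1.prodMk (hext t ht).2

variable (S : SubRiemannian n) (C : Connection n)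

theorem contDiff_hamVF : ContDiff ℝ (⊤ : ℕ∞) S.hamVF := by
  have hsharp : ContDiff ℝ (⊤ : ℕ∞) fun z : V n × V n => S.sharp z.1 z.2 :=
    (S.smooth.comp contDiff_fst).clm_apply contDiff_snd
  have hham : ContDiff ℝ (⊤ : ℕ∞)
      (Function.uncurry fun (z : V n × V n) (y : V n) => S.ham y z.2) :=
    ((((S.smooth.comp contDiff_snd).clm_apply (contDiff_snd.comp contDiff_fst)).inner ℝ
      (contDiff_snd.comp contDiff_fst)).div_const 2)
  have hgrad : ContDiff ℝ (⊤ : ℕ∞) fun z : V n × V n => gradient (fun y => S.ham y z.2) z.1 :=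
    (InnerProductSpace.toDual ℝ (V n)).symm.contDiff.comp (hham.fderiv contDiff_fst le_rfl)
  exact hsharp.prodMk hgrad.neg

def twistCLM : ℕ → V n × V n → (V n →L[ℝ] V n)
  | 0 => fun _ => ContinuousLinearMap.id ℝ (V n)
  | (k+1) => fun z =>
      fderiv ℝ (twistCLM k) z (S.hamVF z)
      + (C.adj.Γ z.1 (S.sharp z.1 z.2)).comp (twistCLM k z)
      - (twistCLM k z).comp (C.Γ z.1 (S.sharp z.1 z.2))

variable {C}

theorem contDiff_twistCLM (hC : ContDiff ℝ (⊤ : ℕ∞) C.Γ) :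
    ∀ k, ContDiff ℝ (⊤ : ℕ∞) (S.twistCLM C k)
  | 0 => contDiff_const
  | (k+1) => by
    have ih := contDiff_twistCLM hC k
    have hsharp : ContDiff ℝ (⊤ : ℕ∞) fun z : V n × V n => S.sharp z.1 z.2 :=
      (S.smooth.comp contDiff_fst).clm_apply contDiff_snd
    have hA : ContDiff ℝ (⊤ : ℕ∞) fun z : V n × V n => C.Γ z.1 (S.sharp z.1 z.2) :=
      (hC.comp contDiff_fst).clm_apply hsharp
    have hÂ : ContDiff ℝ (⊤ : ℕ∞) fun z : V n × V n => C.adj.Γ z.1 (S.sharp z.1 z.2) :=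
      (hC.comp contDiff_fst).clm_flip.clm_apply hsharp
    exact (((ih.fderiv_right le_rfl).clm_apply S.contDiff_hamVF).add (hÂ.clm_comp ih)).sub
      (ih.clm_comp hA)

theorem twistCLM_apply (hC : ContDiff ℝ (⊤ : ℕ∞) C.Γ) :
    ∀ k (z : V n × V n) (u : V n), S.twistCLM C k z u = S.twistP C k z u
  | 0, _, _ => rfl
  | (k+1), z, u => by
    have ih := twistCLM_apply hC k
    have hfderiv : fderiv ℝ (fun w => S.twistCLM C k w u) z
        = (fderiv ℝ (S.twistCLM C k) z).flip u := by
      rw [fderiv_clm_apply ((contDiff_twistCLM S hC k).differentiable (by simp) z)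
        (differentiableAt_const u)]
      simp
    have hfun : (fun w => S.twistP C k w u) = fun w => S.twistCLM C k w u :=
      funext fun w => (ih w u).symm
    show _ = S.dEnd C (S.twistP C k) z u + S.P1f C z (S.twistP C k z u)
    rw [dEnd, hfun, hfderiv, P1f, Connection.tor, ← ih, ← ih]
    simp only [twistCLM, add_apply, sub_apply, ContinuousLinearMap.coe_comp,
      Function.comp_apply, ContinuousLinearMap.flip_apply, Connection.adj]
    abel

variable {S}

theorem hasDerivAt_twistCLM_along (hC : ContDiff ℝ (⊤ : ℕ∞) C.Γ) {γ pp : ℝ → V n} {I : Set ℝ}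
    (hext : S.IsExtremalOn γ pp I) {t : ℝ} (ht : t ∈ I) (k : ℕ) :
    HasDerivAt (fun s => S.twistCLM C k (γ s, pp s))
      (S.twistCLM C (k+1) (γ t, pp t)
        - (C.adj.Γ (γ t) (deriv γ t)).comp (S.twistCLM C k (γ t, pp t))
        + (S.twistCLM C k (γ t, pp t)).comp (C.Γ (γ t) (deriv γ t))) t := by
  have hchain := ((contDiff_twistCLM S hC k).differentiable (by simp)
    (γ t, pp t)).hasFDerivAt.comp_hasDerivAt t (hext.hasDerivAt ht)
  rw [(hext t ht).1.deriv]
  refine hchain.congr_deriv ?_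
  simp only [twistCLM]
  abel

theorem adj_covAlong_twistCLM_apply (hC : ContDiff ℝ (⊤ : ℕ∞) C.Γ) {γ pp : ℝ → V n}
    {I : Set ℝ} (hext : S.IsExtremalOn γ pp I) {t : ℝ} (ht : t ∈ I) {X : ℝ → V n}
    (hX : DifferentiableAt ℝ X t) (k : ℕ) :
    C.adj.covAlong γ (fun s => S.twistCLM C k (γ s, pp s) (X s)) t =
      S.twistCLM C k (γ t, pp t) (C.covAlong γ X t) + S.twistCLM C (k+1) (γ t, pp t) (X t) := by
  simp only [Connection.covAlong,
    ((hasDerivAt_twistCLM_along hC hext ht k).clm_apply hX.hasDerivAt).deriv, map_add,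
    add_apply, sub_apply, ContinuousLinearMap.coe_comp, Function.comp_apply]
  abel

theorem hasDerivAt_transport_comp_twistCLM (hC : ContDiff ℝ (⊤ : ℕ∞) C.Γ) {γ pp : ℝ → V n}
    {I : Set ℝ} (hext : S.IsExtremalOn γ pp I) {t : ℝ} (ht : t ∈ I)
    {P R : ℝ → V n →L[ℝ] V n} (hP : HasDerivAt P (-(C.Γ (γ t) (deriv γ t)).comp (P t)) t)
    (hR : HasDerivAt R ((R t).comp (C.adj.Γ (γ t) (deriv γ t))) t) (k : ℕ) :
    HasDerivAt (fun s => ((R s).comp (S.twistCLM C k (γ s, pp s))).comp (P s))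
      (((R t).comp (S.twistCLM C (k+1) (γ t, pp t))).comp (P t)) t := by
  refine ((hR.clm_comp (hasDerivAt_twistCLM_along hC hext ht k)).clm_comp hP).congr_deriv ?_
  simp only [ContinuousLinearMap.comp_add, ContinuousLinearMap.add_comp,
    ContinuousLinearMap.comp_sub, ContinuousLinearMap.sub_comp,
    ContinuousLinearMap.comp_neg, ContinuousLinearMap.comp_assoc]
  abel

end SubRiemannian

open SubRiemannian

theorem twist_polynomials_and_parallel_transport_general
    {n : ℕ} (S : SubRiemannian n)
    (C : Connection n) (hC : ContDiff ℝ (⊤ : ℕ∞) C.Γ)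
    (γ pp : ℝ → V n) (hext : S.IsExtremalOn γ pp Set.univ) :
    -- (a)
    (∀ (X : ℝ → V n), Differentiable ℝ X → ∀ (k : ℕ) (t : ℝ),
      C.adj.covAlong γ (fun s => S.twistP C k (γ s, pp s) (X s)) t =
        S.twistP C k (γ t, pp t) (C.covAlong γ X t)
          + S.twistP C (k+1) (γ t, pp t) (X t)) ∧
    -- (b)
    (∀ (Pt Pth PthInv : ℝ → (V n →L[ℝ] V n)),
      Pt 0 = ContinuousLinearMap.id ℝ (V n) →
      (∀ t, HasDerivAt Pt (-(C.Γ (γ t) (deriv γ t)).comp (Pt t)) t) →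
      Pth 0 = ContinuousLinearMap.id ℝ (V n) →
      (∀ t, HasDerivAt Pth (-((C.Γ (γ t)).flip (deriv γ t)).comp (Pth t)) t) →
      (∀ t, (PthInv t).comp (Pth t) = ContinuousLinearMap.id ℝ (V n) ∧
            (Pth t).comp (PthInv t) = ContinuousLinearMap.id ℝ (V n)) →
      (∀ t, DifferentiableAt ℝ PthInv t) →
      ∀ (k : ℕ) (v : V n),
        iteratedDeriv k (fun t => (PthInv t).comp (Pt t)) 0 v =
          S.twistP C k (γ 0, pp 0) v) := by
  refine ⟨fun X hX k t => ?_, fun Pt Pth PthInv hPt0 hPt hPth0 hPth hinv hPthInv k v => ?_⟩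
  · simpa only [twistCLM_apply S hC] using
      adj_covAlong_twistCLM_apply hC hext (Set.mem_univ t) (hX t) k
  · have hPthInv_deriv t := hasDerivAt_inverse_of_hasDerivAt_neg_comp (hPth t) (hPthInv t)
      (fun s => (hinv s).1) (hinv t).2
    have hPthInv0 : PthInv 0 = ContinuousLinearMap.id ℝ (V n) := by
      simpa only [hPth0, ContinuousLinearMap.comp_id] using (hinv 0).1
    have hderivs := iteratedDeriv_eq_of_hasDerivAt_succ
      (G := fun k t => ((PthInv t).comp (S.twistCLM C k (γ t, pp t))).comp (Pt t))
      (fun k t => hasDerivAt_transport_comp_twistCLM hC hext (Set.mem_univ t) (hPt t)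
        (hPthInv_deriv t) k) k
    simp only [twistCLM, ContinuousLinearMap.comp_id] at hderivs
    simp only [hderivs, hPt0, hPthInv0, ContinuousLinearMap.comp_id,
      ContinuousLinearMap.id_comp, twistCLM_apply S hC]

theorem twist_polynomials_and_parallel_transport
    {n : ℕ} (S : SubRiemannian n) (hbg : S.BracketGenerating)
    (C : Connection n) (hC : ContDiff ℝ (⊤ : ℕ∞) C.Γ) (hcomp : Compatible S C)
    (γ pp : ℝ → V n) (hext : S.IsExtremalOn γ pp Set.univ) :
    -- (a)
    (∀ (X : ℝ → V n), Differentiable ℝ X → ∀ (k : ℕ) (t : ℝ),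
      C.adj.covAlong γ (fun s => S.twistP C k (γ s, pp s) (X s)) t =
        S.twistP C k (γ t, pp t) (C.covAlong γ X t)
          + S.twistP C (k+1) (γ t, pp t) (X t)) ∧
    -- (b)
    (∀ (Pt Pth PthInv : ℝ → (V n →L[ℝ] V n)),
      Pt 0 = ContinuousLinearMap.id ℝ (V n) →
      (∀ t, HasDerivAt Pt (-(C.Γ (γ t) (deriv γ t)).comp (Pt t)) t) →
      Pth 0 = ContinuousLinearMap.id ℝ (V n) →
      (∀ t, HasDerivAt Pth (-((C.Γ (γ t)).flip (deriv γ t)).comp (Pth t)) t) →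
      (∀ t, (PthInv t).comp (Pth t) = ContinuousLinearMap.id ℝ (V n) ∧
            (Pth t).comp (PthInv t) = ContinuousLinearMap.id ℝ (V n)) →
      (∀ t, DifferentiableAt ℝ PthInv t) →
      ∀ (k : ℕ) (v : V n),
        iteratedDeriv k (fun t => (PthInv t).comp (Pt t)) 0 v =
          S.twistP C k (γ 0, pp 0) v) :=
  twist_polynomials_and_parallel_transport_general S C hC γ pp hext

end SR
end
end
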